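/- Fix a finite group L, θ ∈ Aut(L), and an even integer t ≥ 6. If ℓ ∈ L^θ has even order, then the twisted homogeneous rack C_ℓ of class (L, t, θ) is of type D. -/
import Mathlib


/-- A nonempty subset of `X` closed under the operation `op` (a subrack). -/
def IsSubrackOf {X : Type*} (op : X → X → X) (Y : Set X) : Prop :=
  Y.Nonempty ∧ ∀ a ∈ Y, ∀ b ∈ Y, op a b ∈ Y

/-- The rack with underlying set `C ⊆ X` and operation `op` is of type D:
there is a decomposable subrack `R ⊔ S` of `C` and `r ∈ R`, `s ∈ S` with
`r ▹ (s ▹ (r ▹ s)) ≠ s`. -/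
def IsTypeDOn {X : Type*} (op : X → X → X) (C : Set X) : Prop :=
  ∃ R S : Set X, R ⊆ C ∧ S ⊆ C ∧ IsSubrackOf op R ∧ IsSubrackOf op S ∧
    Disjoint R S ∧
    (∀ r ∈ R, ∀ s ∈ S, op r s ∈ S) ∧ (∀ s ∈ S, ∀ r ∈ R, op s r ∈ R) ∧
    ∃ r ∈ R, ∃ s ∈ S, op r (op s (op r s)) ≠ s

/-- The automorphism `u` of `L^t`: `u(ℓ₁, …, ℓ_t) = (θ(ℓ_t), ℓ₁, …, ℓ_{t-1})`
(indices `0, …, t-1`, so coordinate `0` is `ℓ₁` and coordinate `t-1` is `ℓ_t`). -/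
def thrU {L : Type*} [Group L] (θ : L ≃* L) (t : ℕ) (x : Fin t → L) : Fin t → L :=
  fun i => if (i : ℕ) = 0 then θ (x ⟨t - 1, by have := i.2; omega⟩)
    else x ⟨(i : ℕ) - 1, by have := i.2; omega⟩

/-- The rack operation `y ▹ z = y · u(z · y⁻¹)` on `L^t`. -/
def thrOp {L : Type*} [Group L] (θ : L ≃* L) (t : ℕ) (y z : Fin t → L) : Fin t → L :=
  y * thrU θ t (z * y⁻¹)

/-- The element `(e, …, e, ℓ)` of `L^t`. -/
def thrBase {L : Type*} [Group L] (t : ℕ) (ℓ : L) : Fin t → L :=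
  fun i => if (i : ℕ) = t - 1 then ℓ else 1

/-- The twisted conjugacy class (twisted homogeneous rack) of `x ∈ L^t`
with respect to `u`, i.e. the orbit of `x` under `g ⇀ x = g · x · u(g)⁻¹`. -/
def thrClassOf {L : Type*} [Group L] (θ : L ≃* L) (t : ℕ) (x : Fin t → L) :
    Set (Fin t → L) :=
  {y | ∃ g : Fin t → L, g * x * (thrU θ t g)⁻¹ = y}

/-- The twisted homogeneous rack `C_ℓ = C_{(e,…,e,ℓ)}` of class `(L, t, θ)`. -/
def thrClass {L : Type*} [Group L] (θ : L ≃* L) (t : ℕ) (ℓ : L) : Set (Fin t → L) :=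
  thrClassOf θ t (thrBase t ℓ)

/-- The twisted conjugacy class `O^{L,θ}_ℓ = {a·ℓ·θ(a)⁻¹ : a ∈ L}`. -/
def twConjClass {L : Type*} [Group L] (θ : L ≃* L) (ℓ : L) : Set L :=
  {k | ∃ a : L, a * ℓ * (θ a)⁻¹ = k}

section Aux

variable {L : Type*} [Group L] (θ : L ≃* L) {t : ℕ} {ℓ : L}

lemma aux_theta_zpow (hθℓ : θ ℓ = ℓ) (a : ℤ) : θ (ℓ ^ a) = ℓ ^ a := by
  rw [map_zpow, hθℓ]

lemma aux_one_val (ht : 2 ≤ t) : ((1 : Fin (t - 2 + 2)) : ℕ) = 1 := rfl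

lemma aux_sub1_val [NeZero t] (ht : 2 ≤ t) (i : Fin t) :
    ((i - 1 : Fin t) : ℕ) = if (i : ℕ) = 0 then t - 1 else (i : ℕ) - 1 := by
  have h1 : ((1 : Fin t) : ℕ) = 1 := by
    rw [Fin.val_one']
    exact Nat.mod_eq_of_lt (by omega)
  rw [Fin.sub_def]
  simp only [h1]
  have hi := i.2
  split
  · next h => simp [h, Nat.mod_eq_of_lt (by omega : t - 1 < t)]
  · next h =>
    have heq : t - 1 + (i : ℕ) = ((i : ℕ) - 1) + t := by omega
    rw [heq, Nat.add_mod_right, Nat.mod_eq_of_lt (by omega : (i:ℕ) - 1 < t)]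

lemma aux_add1_val [NeZero t] (ht : 2 ≤ t) (i : Fin t) :
    ((i + 1 : Fin t) : ℕ) = if (i : ℕ) = t - 1 then 0 else (i : ℕ) + 1 := by
  have h1 : ((1 : Fin t) : ℕ) = 1 := by
    rw [Fin.val_one']
    exact Nat.mod_eq_of_lt (by omega)
  rw [Fin.add_def]
  simp only [h1]
  have hi := i.2
  split
  · next h =>
    have heq : (i:ℕ) + 1 = t := by omega
    rw [heq, Nat.mod_self]
  · next h => exact Nat.mod_eq_of_lt (by omega)

/-- The key pointwise formula for the rack operation on tuples of powers of `ℓ`. -/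
lemma aux_thrOp_pow [NeZero t] (ht : 2 ≤ t) (hθℓ : θ ℓ = ℓ) {y z : Fin t → L} {k m : Fin t → ℤ}
    (hy : ∀ i, y i = ℓ ^ k i) (hz : ∀ i, z i = ℓ ^ m i) (i : Fin t) :
    thrOp θ t y z i = ℓ ^ (k i + (m (i - 1) - k (i - 1))) := by
  have hzy : ∀ j : Fin t, z j * y⁻¹ j = ℓ ^ (m j - k j) := by
    intro j
    simp [Pi.inv_apply, hy, hz, zpow_sub]
  have hsub := aux_sub1_val (t := t) ht i
  unfold thrOp thrU
  simp only [Pi.mul_apply]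
  split
  · next h =>
    have he : (i - 1 : Fin t) = ⟨t - 1, by omega⟩ := by
      apply Fin.ext
      simp only [hsub]
      simp [h]
    rw [hy, hzy, aux_theta_zpow θ hθℓ, ← zpow_add, he]
  · next h =>
    have he : (i - 1 : Fin t) = ⟨(i : ℕ) - 1, by have := i.2; omega⟩ := by
      apply Fin.ext
      simp only [hsub]
      simp [h]
    rw [hy, hzy, ← zpow_add, he]

lemma aux_sum_sub1 [NeZero t] (f : Fin t → ℤ) :
    ∑ i : Fin t, f (i - 1) = ∑ i : Fin t, f i :=
  Equiv.sum_comp (Equiv.subRight (1 : Fin t)) f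

/-- evens -/
def auxEv (t : ℕ) : Finset (Fin t) := Finset.univ.filter (fun i => Even (i : ℕ))

lemma aux_sum_prev_even [NeZero t] (ht : 2 ≤ t) (hteven : Even t) (f : Fin t → ℤ) :
    ∑ i ∈ auxEv t, f (i - 1)
      = ∑ j ∈ Finset.univ.filter (fun j : Fin t => ¬ Even (j : ℕ)), f j := by
  refine Finset.sum_nbij' (i := fun a : Fin t => a - 1) (j := fun b : Fin t => b + 1)
    ?_ ?_ ?_ ?_ ?_
  · intro a ha
    simp only [auxEv, Finset.mem_filter, Finset.mem_univ, true_and] at ha ⊢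
    rw [aux_sub1_val ht a]
    have := a.2
    rcases hteven with ⟨u, hu⟩
    rcases ha with ⟨v, hv⟩
    split <;> · rw [Nat.even_iff]; omega
  · intro b hb
    simp only [auxEv, Finset.mem_filter, Finset.mem_univ, true_and] at hb ⊢
    rw [aux_add1_val ht b]
    have := b.2
    rcases hteven with ⟨u, hu⟩
    rw [Nat.even_iff] at hb ⊢
    split <;> omega
  · intro a _; exact sub_add_cancel a 1
  · intro b _; exact add_sub_cancel_right b 1
  · intro a _; rfl

end Aux

section Main

variable {L : Type*} [Group L] (θ : L ≃* L) {t : ℕ} {ℓ : L}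

/-- The candidate subracks, indexed by a parity bit `ε`. -/
def auxSet (θ : L ≃* L) (t : ℕ) (ℓ : L) (ε : ℤ) : Set (Fin t → L) :=
  {x | ∃ k : Fin t → ℤ, (∀ i, x i = ℓ ^ k i) ∧ ℓ ^ (∑ i, k i) = ℓ ∧
    (∑ i ∈ auxEv t, k i) % 2 = ε}

lemma aux_mem_class (ht : 2 ≤ t) (hθℓ : θ ℓ = ℓ) {x : Fin t → L} {k : Fin t → ℤ}
    (hx : ∀ i, x i = ℓ ^ k i) (hsum : ℓ ^ (∑ i, k i) = ℓ) :
    x ∈ thrClass θ t ℓ := by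
  classical
  set kn : ℕ → ℤ := fun j => if h : j < t then k ⟨j, h⟩ else 0 with hkn
  set K : ℕ → ℤ := fun n => ∑ j ∈ Finset.range (n + 1), kn j with hK
  set gn : ℕ → L := fun n => ℓ ^ (K n - if n = t - 1 then 1 else 0) with hgn
  have hknk : ∀ i : Fin t, kn (i : ℕ) = k i := by
    intro i; simp [hkn, i.2]
  have hKtot : K (t - 1) = ∑ i, k i := by
    have h1 : t - 1 + 1 = t := by omega
    rw [hK]
    simp only [h1]
    rw [← Fin.sum_univ_eq_sum_range kn t]
    exact Finset.sum_congr rfl fun i _ => hknk i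
  have h0 : ℓ ^ (K (t - 1) - 1) = 1 := by
    rw [zpow_sub, hKtot, hsum, zpow_one, mul_inv_cancel]
  have hsucc : ∀ n : ℕ, 0 < n → K n = K (n - 1) + kn n := by
    intro n hn
    show (∑ j ∈ Finset.range (n + 1), kn j)
        = (∑ j ∈ Finset.range ((n - 1) + 1), kn j) + kn n
    have h' : n + 1 = ((n - 1) + 1) + 1 := by omega
    rw [h', Finset.sum_range_succ, show n - 1 + 1 = n by omega]
  have hmk : ∀ (m : ℕ) (h : m < t), ((⟨m, h⟩ : Fin t) : ℕ) = m := fun _ _ => rfl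
  refine ⟨fun i => gn (i : ℕ), funext fun i => ?_⟩
  simp only [Pi.mul_apply, Pi.inv_apply]
  unfold thrU thrBase
  obtain ⟨iv, hiv⟩ := i
  simp only [hmk]
  have hxk : x ⟨iv, hiv⟩ = ℓ ^ kn iv := by
    rw [hx, ← hknk ⟨iv, hiv⟩, hmk]
  rcases Nat.eq_zero_or_pos iv with hiv0 | hivpos
  · -- iv = 0
    subst hiv0
    rw [if_neg (show ¬(0:ℕ) = t - 1 by omega), if_pos rfl, hxk]
    have h1 : gn (t - 1) = 1 := by
      rw [hgn]; simp only [if_pos rfl]; exact h0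
    have h2 : gn 0 = ℓ ^ kn 0 := by
      rw [hgn]
      simp only [if_neg (show ¬(0:ℕ) = t - 1 by omega), sub_zero]
      rw [hK]
      simp [Finset.sum_range_one]
    rw [h1, h2, map_one]
    group
  · rw [if_neg (show ¬ iv = 0 by omega)]
    have hs := hsucc iv hivpos
    rcases eq_or_ne iv (t - 1) with hlast | hmid
    · -- iv = t - 1
      subst hlast
      rw [if_pos rfl, hxk]
      have h1 : gn (t - 1) = 1 := by
        rw [hgn]; simp only [if_pos rfl]; exact h0
      have h2 : gn (t - 1 - 1) = ℓ ^ K (t - 1 - 1) := by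
        rw [hgn]
        simp only [if_neg (show ¬ t - 1 - 1 = t - 1 by omega), sub_zero]
      have h3 : ℓ ^ (K (t - 1 - 1) + kn (t - 1) - 1) = 1 := by
        rw [← hs]; exact h0
      rw [h1, h2]
      calc 1 * ℓ * (ℓ ^ K (t - 1 - 1))⁻¹
          = ℓ ^ (1 - K (t - 1 - 1)) := by
            rw [zpow_sub, zpow_one]; group
        _ = ℓ ^ (K (t - 1 - 1) + kn (t - 1) - 1) * ℓ ^ (1 - K (t - 1 - 1)) := by
            rw [h3, one_mul]
        _ = ℓ ^ kn (t - 1) := by rw [← zpow_add]; congr 1; ring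
    · -- middle
      rw [if_neg hmid, hxk]
      have h2 : gn iv = ℓ ^ K iv := by
        rw [hgn]
        simp only [if_neg hmid, sub_zero]
      have h2' : gn (iv - 1) = ℓ ^ K (iv - 1) := by
        rw [hgn]
        simp only [if_neg (show ¬ iv - 1 = t - 1 by omega), sub_zero]
      rw [h2, h2', hs, zpow_add]
      group

lemma aux_sum_odd (hord : Even (orderOf ℓ)) {k : Fin t → ℤ}
    (hsum : ℓ ^ (∑ i, k i) = ℓ) : (∑ i, k i) % 2 = 1 := by
  have h1 : ℓ ^ ((∑ i, k i) - 1) = 1 := by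
    rw [zpow_sub, hsum, zpow_one, mul_inv_cancel]
  have h2 : ((orderOf ℓ : ℤ)) ∣ ((∑ i, k i) - 1) := orderOf_dvd_iff_zpow_eq_one.mpr h1
  rcases hord with ⟨u, hu⟩
  have h3 : (2 : ℤ) ∣ (orderOf ℓ : ℤ) := ⟨u, by exact_mod_cast hu.trans (two_mul u).symm⟩
  have := h3.trans h2
  omega

/-- Closure of the parity sets under the rack operation. -/
lemma aux_closure (ht : 2 ≤ t) (hteven : Even t) (hθℓ : θ ℓ = ℓ)
    (hord : Even (orderOf ℓ)) {x y : Fin t → L} {ε δ : ℤ}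
    (hx : x ∈ auxSet θ t ℓ ε) (hy : y ∈ auxSet θ t ℓ δ) :
    thrOp θ t x y ∈ auxSet θ t ℓ δ := by
  haveI : NeZero t := ⟨by omega⟩
  obtain ⟨k, hk1, hk2, hk3⟩ := hx
  obtain ⟨m, hm1, hm2, hm3⟩ := hy
  refine ⟨fun i => k i + (m (i - 1) - k (i - 1)), fun i => aux_thrOp_pow θ ht hθℓ hk1 hm1 i,
    ?_, ?_⟩
  · have h : ∑ i : Fin t, (k i + (m (i - 1) - k (i - 1))) = ∑ i, m i := by
      rw [Finset.sum_add_distrib, Finset.sum_sub_distrib, aux_sum_sub1, aux_sum_sub1]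
      ring
    rw [h, hm2]
  · have hsplit : ∑ i ∈ auxEv t, (k i + (m (i - 1) - k (i - 1)))
        = (∑ i ∈ auxEv t, k i) + ((∑ i ∈ auxEv t, m (i - 1)) - ∑ i ∈ auxEv t, k (i - 1)) := by
      rw [Finset.sum_add_distrib, Finset.sum_sub_distrib]
    have hm' : ∑ i ∈ auxEv t, m (i - 1)
        = (∑ i, m i) - ∑ i ∈ auxEv t, m i := by
      rw [aux_sum_prev_even ht hteven m]
      have := Finset.sum_filter_add_sum_filter_not Finset.univ (fun i : Fin t => Even (i : ℕ)) m
      unfold auxEv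
      omega
    have hk' : ∑ i ∈ auxEv t, k (i - 1)
        = (∑ i, k i) - ∑ i ∈ auxEv t, k i := by
      rw [aux_sum_prev_even ht hteven k]
      have := Finset.sum_filter_add_sum_filter_not Finset.univ (fun i : Fin t => Even (i : ℕ)) k
      unfold auxEv
      omega
    have hks := aux_sum_odd hord hk2
    have hms := aux_sum_odd hord hm2
    rw [hsplit, hm', hk']
    omega

lemma aux_disjoint (hord : Even (orderOf ℓ)) :
    Disjoint (auxSet θ t ℓ 0) (auxSet θ t ℓ 1) := by
  rw [Set.disjoint_left]
  rintro x ⟨k, hk1, -, hk3⟩ ⟨m, hm1, -, hm3⟩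
  have h2 : ∀ i, (2 : ℤ) ∣ (k i - m i) := by
    intro i
    have he : ℓ ^ k i = ℓ ^ m i := by rw [← hk1, ← hm1]
    have hdvd : ((orderOf ℓ : ℤ)) ∣ (k i - m i) := by
      rw [zpow_eq_zpow_iff_modEq] at he
      exact Int.ModEq.dvd he.symm
    rcases hord with ⟨u, hu⟩
    have h2o : (2 : ℤ) ∣ (orderOf ℓ : ℤ) := ⟨u, by exact_mod_cast hu.trans (two_mul u).symm⟩
    exact h2o.trans hdvd
  have h3 : (2 : ℤ) ∣ ((∑ i ∈ auxEv t, k i) - ∑ i ∈ auxEv t, m i) := by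
    rw [← Finset.sum_sub_distrib]
    exact Finset.dvd_sum fun i _ => h2 i
  omega

end Main

lemma aux_val_mk {t : ℕ} (m : ℕ) (h : m < t) : ((⟨m, h⟩ : Fin t) : ℕ) = m := rfl

/-- If `t ≥ 6` is even and `ℓ ∈ L^θ` has even order, then `C_ℓ` is of type D. -/
theorem thrClass_isTypeD_of_even {L : Type*} [Group L] [Fintype L]
    (θ : L ≃* L) (t : ℕ) (ht : 6 ≤ t) (hteven : Even t)
    (ℓ : L) (hθℓ : θ ℓ = ℓ) (hord : Even (orderOf ℓ)) :
    IsTypeDOn (thrOp θ t) (thrClass θ t ℓ) := by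
  have ht2 : 2 ≤ t := by omega
  have hℓ1 : ℓ ≠ 1 := by
    intro h
    rw [h, orderOf_one] at hord
    exact (Nat.not_even_iff_odd.mpr odd_one) hord
  set s0 : Fin t → L := fun i => if (i : ℕ) = t - 2 then ℓ else 1 with hs0def
  have hr0mem : thrBase t ℓ ∈ auxSet θ t ℓ 0 := by
    refine ⟨fun i => if (i : ℕ) = t - 1 then 1 else 0, fun i => ?_, ?_, ?_⟩
    · by_cases h : (i : ℕ) = t - 1 <;> simp [thrBase, h]
    · have h : ∑ i : Fin t, (if (i : ℕ) = t - 1 then (1:ℤ) else 0)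
          = ∑ i : Fin t, (if i = (⟨t - 1, by omega⟩ : Fin t) then (1:ℤ) else 0) := by
        refine Finset.sum_congr rfl fun i _ => ?_
        congr 1
        simp [Fin.ext_iff]
      rw [h, Finset.sum_ite_eq' Finset.univ]
      simp
    · have h : ∑ i ∈ auxEv t, (if (i : ℕ) = t - 1 then (1:ℤ) else 0)
          = ∑ i ∈ auxEv t, (if i = (⟨t - 1, by omega⟩ : Fin t) then (1:ℤ) else 0) := by
        refine Finset.sum_congr rfl fun i _ => ?_
        congr 1
        simp [Fin.ext_iff]
      rw [h, Finset.sum_ite_eq' (auxEv t)]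
      have hnm : (⟨t - 1, by omega⟩ : Fin t) ∉ auxEv t := by
        simp only [auxEv, Finset.mem_filter, Finset.mem_univ, true_and]
        rcases hteven with ⟨u, hu⟩
        simp only [Nat.even_iff]
        omega
      rw [if_neg hnm]
      rfl
  have hs0mem : s0 ∈ auxSet θ t ℓ 1 := by
    refine ⟨fun i => if (i : ℕ) = t - 2 then 1 else 0, fun i => ?_, ?_, ?_⟩
    · by_cases h : (i : ℕ) = t - 2 <;> simp [hs0def, h]
    · have h : ∑ i : Fin t, (if (i : ℕ) = t - 2 then (1:ℤ) else 0)
          = ∑ i : Fin t, (if i = (⟨t - 2, by omega⟩ : Fin t) then (1:ℤ) else 0) := by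
        refine Finset.sum_congr rfl fun i _ => ?_
        congr 1
        simp [Fin.ext_iff]
      rw [h, Finset.sum_ite_eq' Finset.univ]
      simp
    · have h : ∑ i ∈ auxEv t, (if (i : ℕ) = t - 2 then (1:ℤ) else 0)
          = ∑ i ∈ auxEv t, (if i = (⟨t - 2, by omega⟩ : Fin t) then (1:ℤ) else 0) := by
        refine Finset.sum_congr rfl fun i _ => ?_
        congr 1
        simp [Fin.ext_iff]
      rw [h, Finset.sum_ite_eq' (auxEv t)]
      have hnm : (⟨t - 2, by omega⟩ : Fin t) ∈ auxEv t := by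
        simp only [auxEv, Finset.mem_filter, Finset.mem_univ, true_and]
        rcases hteven with ⟨u, hu⟩
        simp only [Nat.even_iff]
        omega
      rw [if_pos hnm]
      rfl
  refine ⟨auxSet θ t ℓ 0, auxSet θ t ℓ 1, ?_, ?_, ?_, ?_, aux_disjoint θ hord, ?_, ?_, ?_⟩
  · rintro x ⟨k, hk1, hk2, -⟩; exact aux_mem_class θ ht2 hθℓ hk1 hk2
  · rintro x ⟨k, hk1, hk2, -⟩; exact aux_mem_class θ ht2 hθℓ hk1 hk2
  · exact ⟨⟨_, hr0mem⟩, fun a ha b hb => aux_closure θ ht2 hteven hθℓ hord ha hb⟩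
  · exact ⟨⟨s0, hs0mem⟩, fun a ha b hb => aux_closure θ ht2 hteven hθℓ hord ha hb⟩
  · exact fun r hr s hs => aux_closure θ ht2 hteven hθℓ hord hr hs
  · exact fun s hs r hr => aux_closure θ ht2 hteven hθℓ hord hs hr
  · refine ⟨thrBase t ℓ, hr0mem, s0, hs0mem, ?_⟩
    intro hcontra
    have h2 := congrFun hcontra (⟨2, by omega⟩ : Fin t)
    have hval : thrOp θ t (thrBase t ℓ) (thrOp θ t s0 (thrOp θ t (thrBase t ℓ) s0))
        (⟨2, by omega⟩ : Fin t) = ℓ⁻¹ := by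
      simp only [thrOp, thrU, thrBase, hs0def, Pi.mul_apply, Pi.inv_apply, aux_val_mk]
      norm_num [show ¬(2:ℕ) = t - 1 by omega, show ¬(1:ℕ) = t - 1 by omega,
        show ¬(0:ℕ) = t - 1 by omega, show ¬(2:ℕ) = t - 2 by omega,
        show ¬(1:ℕ) = t - 2 by omega, show ¬(0:ℕ) = t - 2 by omega,
        show ¬(t - 1) = t - 2 by omega, show ¬(t - 1) = 0 by omega,
        hθℓ, map_inv]
    rw [hval] at h2
    have hs2 : s0 (⟨2, by omega⟩ : Fin t) = 1 := by
      rw [hs0def]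
      simp only [aux_val_mk]
      rw [if_neg (show ¬(2:ℕ) = t - 2 by omega)]
    rw [hs2, inv_eq_one] at h2
    exact hℓ1 h2
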